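/- arXiv:1503.06482 — 4 statements merged into one kernel-verified Lean document; each statement's English description precedes it below -/
import Mathlib

section
/- Let X be a nonnegative random variable with E[X] ≥ m and E[X²] ≤ s, where 0 < m ≤ √s. Let Y be the random variable with P(Y = s/m) = m²/s = 1 − P(Y = 0). Then for every real w, E[((w − X)₊)²] ≤ E[((w − Y)₊)²], where x₊ := max(x,0). -/
open MeasureTheory

/-- If `X ≥ 0`, `E[X] ≥ m > 0`, `E[X²] ≤ s`, `m² ≤ s`, and `Y` is the two-point random variable
with `P(Y = s/m) = m²/s = 1 - P(Y = 0)`, then `E[((w - X)₊)²] ≤ E[((w - Y)₊)²]` for all real `w`. -/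
theorem stmt2 {Ω : Type*} [MeasurableSpace Ω] (μ : Measure Ω) [IsProbabilityMeasure μ]
    (X : Ω → ℝ) (m s : ℝ) (hm : 0 < m) (hms : m ^ 2 ≤ s)
    (hXnn : ∀ ω, 0 ≤ X ω)
    (hX : Integrable X μ) (hX2 : Integrable (fun ω => (X ω) ^ 2) μ)
    (hEX : m ≤ ∫ ω, X ω ∂μ) (hEX2 : ∫ ω, (X ω) ^ 2 ∂μ ≤ s) :
    ∀ w : ℝ,
      ∫ ω, (max (w - X ω) 0) ^ 2 ∂μ ≤
        ∫ y, (max (w - y) 0) ^ 2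
          ∂(ENNReal.ofReal (m ^ 2 / s) • Measure.dirac (s / m)
            + ENNReal.ofReal (1 - m ^ 2 / s) • Measure.dirac (0 : ℝ)) := by
  intro w
  have hs : 0 < s := lt_of_lt_of_le (by positivity) hms
  set c : ℝ := s / m with hcdef
  have hc0 : 0 < c := div_pos hs hm
  have hp0 : (0:ℝ) ≤ m ^ 2 / s := by positivity
  have hp1 : m ^ 2 / s ≤ 1 := (div_le_one hs).2 hms
  -- compute the RHS integral
  have hint1 : Integrable (fun y : ℝ => (max (w - y) 0) ^ 2)
      (ENNReal.ofReal (m ^ 2 / s) • Measure.dirac c) :=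
    ((integrable_const ((max (w - c) 0) ^ 2)).congr
      (ae_eq_dirac (fun y : ℝ => (max (w - y) 0) ^ 2)).symm).smul_measure ENNReal.ofReal_ne_top
  have hint2 : Integrable (fun y : ℝ => (max (w - y) 0) ^ 2)
      (ENNReal.ofReal (1 - m ^ 2 / s) • Measure.dirac (0 : ℝ)) :=
    ((integrable_const ((max (w - 0) 0) ^ 2)).congr
      (ae_eq_dirac (fun y : ℝ => (max (w - y) 0) ^ 2)).symm).smul_measure ENNReal.ofReal_ne_top
  have hRHS : ∫ y, (max (w - y) 0) ^ 2
          ∂(ENNReal.ofReal (m ^ 2 / s) • Measure.dirac c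
            + ENNReal.ofReal (1 - m ^ 2 / s) • Measure.dirac (0 : ℝ))
      = (m ^ 2 / s) * (max (w - c) 0) ^ 2 + (1 - m ^ 2 / s) * (max w 0) ^ 2 := by
    rw [integral_add_measure hint1 hint2, integral_smul_measure, integral_smul_measure,
      integral_dirac, integral_dirac, ENNReal.toReal_ofReal hp0,
      ENNReal.toReal_ofReal (by linarith : (0:ℝ) ≤ 1 - m ^ 2 / s)]
    norm_num
  rw [hRHS]
  rcases le_or_gt w 0 with hw | hw
  · have hz : ∀ ω, (max (w - X ω) 0) ^ 2 = 0 := fun ω => by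
      rw [max_eq_right (by linarith [hXnn ω])]; ring
    simp only [hz, integral_zero]
    have h2 : (0:ℝ) ≤ 1 - m ^ 2 / s := by linarith
    exact add_nonneg (mul_nonneg hp0 (sq_nonneg _)) (mul_nonneg h2 (sq_nonneg _))
  -- main case : w > 0
  set l : ℝ := min 1 (w / c) with hldef
  have hl0 : 0 ≤ l := le_min zero_le_one (div_nonneg hw.le hc0.le)
  have hl1 : l ≤ 1 := min_le_left _ _
  have hpt : ∀ ω, (max (w - X ω) 0) ^ 2 ≤ (w - l * X ω) ^ 2 := by
    intro ω
    have hx := hXnn ω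
    rcases le_total (X ω) w with h | h
    · rw [max_eq_left (by linarith)]
      nlinarith [mul_nonneg (sub_nonneg.2 hl1) hx, mul_nonneg hl0 hx]
    · rw [max_eq_right (by linarith)]
      simpa using sq_nonneg (w - l * X ω)
  have hgint : Integrable (fun ω => (w - l * X ω) ^ 2) μ := by
    have : (fun ω => (w - l * X ω) ^ 2)
        = fun ω => w ^ 2 - (2 * l * w) * X ω + l ^ 2 * (X ω) ^ 2 := by
      funext ω; ring
    rw [this]
    exact ((integrable_const _).sub (hX.const_mul _)).add (hX2.const_mul _)
  have hfint : Integrable (fun ω => (max (w - X ω) 0) ^ 2) μ := by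
    have hmeas : AEStronglyMeasurable (fun ω => (max (w - X ω) 0) ^ 2) μ := by
      have hcont : Continuous (fun y : ℝ => (max (w - y) 0) ^ 2) :=
        ((continuous_const.sub continuous_id).max continuous_const).pow 2
      exact hcont.comp_aestronglyMeasurable hX.aestronglyMeasurable
    refine hgint.mono hmeas (Filter.Eventually.of_forall fun ω => ?_)
    rw [Real.norm_eq_abs, Real.norm_eq_abs, abs_of_nonneg (by positivity),
      abs_of_nonneg (by positivity)]
    exact hpt ω
  have hEg : ∫ ω, (w - l * X ω) ^ 2 ∂μ
      = w ^ 2 - (2 * l * w) * (∫ ω, X ω ∂μ) + l ^ 2 * (∫ ω, (X ω) ^ 2 ∂μ) := by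
    have h1 : (fun ω => (w - l * X ω) ^ 2)
        = fun ω => (w ^ 2 - (2 * l * w) * X ω) + l ^ 2 * (X ω) ^ 2 := by
      funext ω; ring
    have hA : ∫ ω, ((w ^ 2 - (2 * l * w) * X ω) + l ^ 2 * (X ω) ^ 2) ∂μ
        = (∫ ω, (w ^ 2 - (2 * l * w) * X ω) ∂μ) + ∫ ω, l ^ 2 * (X ω) ^ 2 ∂μ :=
      integral_add ((integrable_const _).sub (hX.const_mul _)) (hX2.const_mul _)
    have hB : ∫ ω, (w ^ 2 - (2 * l * w) * X ω) ∂μ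
        = (∫ _ω : Ω, (w ^ 2 : ℝ) ∂μ) - ∫ ω, (2 * l * w) * X ω ∂μ :=
      integral_sub (integrable_const _) (hX.const_mul _)
    rw [h1, hA, hB, integral_const_mul, integral_const_mul, integral_const, probReal_univ]
    simp
  calc ∫ ω, (max (w - X ω) 0) ^ 2 ∂μ
      ≤ ∫ ω, (w - l * X ω) ^ 2 ∂μ :=
        integral_mono hfint hgint hpt
    _ = w ^ 2 - (2 * l * w) * (∫ ω, X ω ∂μ) + l ^ 2 * (∫ ω, (X ω) ^ 2 ∂μ) := hEg
    _ ≤ w ^ 2 - (2 * l * w) * m + l ^ 2 * s := by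
        have h1 : 0 ≤ l * w := mul_nonneg hl0 hw.le
        nlinarith [sq_nonneg l]
    _ = (m ^ 2 / s) * (max (w - c) 0) ^ 2 + (1 - m ^ 2 / s) * (max w 0) ^ 2 := by
        rw [max_eq_left hw.le]
        rcases le_or_gt w c with hcw | hcw
        · have hl : l = w / c := min_eq_right ((div_le_one hc0).2 hcw)
          rw [max_eq_right (by linarith), hl, hcdef]
          field_simp
          ring
        · have hl : l = 1 := min_eq_left ((one_le_div hc0).2 hcw.le)
          rw [max_eq_left (by linarith), hl, hcdef]
          field_simp
          ring
end

section
/- Let D₀(a,b,p,q) be as above. For all real a, b with 0 < b < a and a + b < 1, and all q ∈ (0,1), one has D₀(a,b,1,q) ≥ 0. Specifically, D₀(a,b,1,q) = bq(7a² + 4ab − 12a + b²) − a(5a² + 2ab − 6a − b²) + 6(1−b)b²q² is convex in q, its value at q = 1 equals (a−b)²[6 − 5(a+b)] > 0, and its q-derivative at q = 1 equals (a−b)b[4b + 7(a+b) − 12] < 0; hence it is nonnegative for q ∈ (0,1). -/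
noncomputable def D0 (a b p q : ℝ) : ℝ :=
  a^3*p - 2*a^2*b*p + a*b^2*p + 6*a^2*p^2 - 6*a^3*p^2 + a^2*b*q - 2*a*b^2*q + b^3*q
    - 12*a*b*p*q + 6*a^2*b*p*q + 6*a*b^2*p*q + 6*b^2*q^2 - 6*b^3*q^2

/-- For `0 < b < a`, `a + b < 1` and `q ∈ (0,1)`: `D₀(a,b,1,q) ≥ 0`; moreover the stated
formula for `D₀(a,b,1,q)`, its convexity in `q`, its value at `q = 1`, and the sign of its
`q`-derivative at `q = 1` hold. -/
theorem stmt8 (a b q : ℝ) (hb : 0 < b) (hba : b < a) (hab : a + b < 1)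
    (hq0 : 0 < q) (hq1 : q < 1) :
    D0 a b 1 q
        = b*q*(7*a^2 + 4*a*b - 12*a + b^2) - a*(5*a^2 + 2*a*b - 6*a - b^2)
          + 6*(1 - b)*b^2*q^2 ∧
    ConvexOn ℝ Set.univ (fun q' => D0 a b 1 q') ∧
    D0 a b 1 1 = (a - b)^2 * (6 - 5*(a + b)) ∧
    0 < D0 a b 1 1 ∧
    deriv (fun q' => D0 a b 1 q') 1 = (a - b)*b*(4*b + 7*(a + b) - 12) ∧
    deriv (fun q' => D0 a b 1 q') 1 < 0 ∧
    0 ≤ D0 a b 1 q := by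
  have hA : (0:ℝ) ≤ 6*(1-b)*b^2 := by nlinarith
  have hfun : (fun q' => D0 a b 1 q')
      = fun q' => 6*(1-b)*b^2 * q'^2 + (b*(7*a^2 + 4*a*b - 12*a + b^2)) * q'
          + (- a*(5*a^2 + 2*a*b - 6*a - b^2)) := by
    funext x; simp only [D0]; ring
  have hderiv : deriv (fun q' => D0 a b 1 q') 1 = (a - b)*b*(4*b + 7*(a + b) - 12) := by
    rw [hfun]
    have h1 : HasDerivAt (fun q' : ℝ => 6*(1-b)*b^2 * q'^2
        + (b*(7*a^2 + 4*a*b - 12*a + b^2)) * q' + (- a*(5*a^2 + 2*a*b - 6*a - b^2)))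
        (6*(1-b)*b^2 * (2*1^1) + b*(7*a^2 + 4*a*b - 12*a + b^2) * 1) 1 :=
      (((hasDerivAt_pow 2 (1:ℝ)).const_mul _).add
        ((hasDerivAt_id (1:ℝ)).const_mul _)).add_const _
    rw [h1.deriv]; ring
  have hval : D0 a b 1 1 = (a - b)^2 * (6 - 5*(a + b)) := by simp only [D0]; ring
  have hconv : ConvexOn ℝ Set.univ (fun q' => D0 a b 1 q') := by
    rw [hfun]
    refine ⟨convex_univ, fun x _ y _ s t hs ht hst => ?_⟩
    have ht' : t = 1 - s := by linarith
    subst ht'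
    simp only [smul_eq_mul]
    nlinarith [mul_nonneg hA (mul_nonneg (mul_nonneg hs ht) (sq_nonneg (x-y)))]
  refine ⟨by simp only [D0]; ring, hconv, hval, ?_, hderiv, ?_, ?_⟩
  · rw [hval]
    exact mul_pos (pow_pos (sub_pos.2 hba) 2) (by linarith)
  · rw [hderiv]
    have := mul_pos (mul_pos (sub_pos.2 hba) hb)
      (show (0:ℝ) < 12 - (4*b + 7*(a+b)) by linarith)
    nlinarith
  · simp only [D0]
    nlinarith [mul_nonneg hA (sq_nonneg (q-1)),
      mul_pos (mul_pos (mul_pos (sub_pos.2 hba) hb)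
        (show (0:ℝ) < 12 - (4*b + 7*(a+b)) by linarith))
        (show (0:ℝ) < 1 - q by linarith),
      mul_pos (pow_pos (sub_pos.2 hba) 2) (show (0:ℝ) < 6 - 5*(a+b) by linarith)]
end

section
/- For all real a, b with 1/2 ≤ 1−b ≤ a ≤ 1 (equivalently b ≤ a, a ≤ 1, a + b ≥ 1), the polynomial (1−b)³b − 2a(1−b)³ + a²(3 − 3b + b²) is nonnegative. In particular it is convex in a, equals (1−b)²[1 + 2b(1−b)] ≥ 0 at a = 1−b, and its a-derivative at a = 1−b is 2(2−b)(1−b) ≥ 0 for b ∈ [0,1]. -/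
/-- For `b ≤ a`, `a ≤ 1`, `a + b ≥ 1`, `b ∈ [0,1]`: the polynomial
`(1-b)³b - 2a(1-b)³ + a²(3 - 3b + b²)` is nonnegative; it is convex in `a`, equals
`(1-b)²[1 + 2b(1-b)] ≥ 0` at `a = 1-b`, and its `a`-derivative at `a = 1-b` is
`2(2-b)(1-b) ≥ 0`. -/
theorem stmt17 (a b : ℝ) (hba : b ≤ a) (ha1 : a ≤ 1) (hab : 1 ≤ a + b)
    (hb : b ∈ Set.Icc (0:ℝ) 1) :
    0 ≤ (1 - b)^3*b - 2*a*(1 - b)^3 + a^2*(3 - 3*b + b^2) ∧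
    ConvexOn ℝ Set.univ (fun a' => (1 - b)^3*b - 2*a'*(1 - b)^3 + a'^2*(3 - 3*b + b^2)) ∧
    (fun a' => (1 - b)^3*b - 2*a'*(1 - b)^3 + a'^2*(3 - 3*b + b^2)) (1 - b)
      = (1 - b)^2*(1 + 2*b*(1 - b)) ∧
    0 ≤ (1 - b)^2*(1 + 2*b*(1 - b)) ∧
    deriv (fun a' => (1 - b)^3*b - 2*a'*(1 - b)^3 + a'^2*(3 - 3*b + b^2)) (1 - b)
      = 2*(2 - b)*(1 - b) ∧
    0 ≤ 2*(2 - b)*(1 - b) := by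
  obtain ⟨hb0, hb1⟩ := hb
  have hb1' : (0:ℝ) ≤ 1 - b := by linarith
  have he : (0:ℝ) ≤ 3 - 3*b + b^2 := by nlinarith [sq_nonneg b]
  have h3 : (0:ℝ) ≤ (1 - b)^2*(1 + 2*b*(1 - b)) := by
    nlinarith [mul_nonneg (sq_nonneg (1 - b)) (mul_nonneg hb0 hb1')]
  refine ⟨?_, ?_, by ring, h3, ?_, by nlinarith⟩
  · nlinarith [mul_nonneg (mul_nonneg (by linarith : (0:ℝ) ≤ 2 - b) hb1')
      (by linarith : (0:ℝ) ≤ a + b - 1), mul_nonneg he (sq_nonneg (a - (1 - b))), h3]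
  · refine ⟨convex_univ, ?_⟩
    intro x _ y _ p q hp hq hpq
    simp only [smul_eq_mul]
    have hq' : q = 1 - p := by linarith
    subst hq'
    nlinarith [mul_nonneg (mul_nonneg (mul_nonneg hp hq) (sq_nonneg (x - y))) he]
  · have h : HasDerivAt (fun a' : ℝ => (1 - b)^3*b - 2*a'*(1 - b)^3 + a'^2*(3 - 3*b + b^2))
        (0 - 2*1*(1 - b)^3 + ((2:ℕ)*(1-b)^(2-1))*(3 - 3*b + b^2)) (1 - b) := by
      simpa [Pi.add_def, Pi.sub_def] using ((hasDerivAt_const (1-b) ((1-b)^3*b)).sub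
        (((hasDerivAt_id (1-b)).const_mul 2).mul_const ((1-b)^3))).add
        ((hasDerivAt_pow 2 (1-b)).mul_const (3 - 3*b + b^2))
    rw [h.deriv]; push_cast; ring
end

section
/- For all real a, b with 0 ≤ 1−a ≤ b and a ≤ 1 (so b ≥ 1−a, 0 ≤ a ≤ 1), the polynomial (1−a)³(a − 2b) + (3 − 3a + a²)b² is nonnegative. In particular it is convex in b, equals (1−a)²[1 + 2a(1−a)] ≥ 0 at b = 1−a, and its b-derivative at b = 1−a is 2(2−a)(1−a) ≥ 0. -/
/-- For `1 - a ≤ b`, `0 ≤ a ≤ 1`: the polynomial `(1-a)³(a - 2b) + (3 - 3a + a²)b²` is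
nonnegative; it is convex in `b`, equals `(1-a)²[1 + 2a(1-a)] ≥ 0` at `b = 1-a`, and its
`b`-derivative at `b = 1-a` is `2(2-a)(1-a) ≥ 0`. -/
theorem stmt18 (a b : ℝ) (hab : 1 - a ≤ b) (ha0 : 0 ≤ a) (ha1 : a ≤ 1) :
    0 ≤ (1 - a)^3*(a - 2*b) + (3 - 3*a + a^2)*b^2 ∧
    ConvexOn ℝ Set.univ (fun b' => (1 - a)^3*(a - 2*b') + (3 - 3*a + a^2)*b'^2) ∧
    (fun b' => (1 - a)^3*(a - 2*b') + (3 - 3*a + a^2)*b'^2) (1 - a)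
      = (1 - a)^2*(1 + 2*a*(1 - a)) ∧
    0 ≤ (1 - a)^2*(1 + 2*a*(1 - a)) ∧
    deriv (fun b' => (1 - a)^3*(a - 2*b') + (3 - 3*a + a^2)*b'^2) (1 - a)
      = 2*(2 - a)*(1 - a) ∧
    0 ≤ 2*(2 - a)*(1 - a) := by
  refine ⟨?_, ?_, by ring, by nlinarith [sq_nonneg (1-a), mul_nonneg ha0 (sub_nonneg.2 ha1)], ?_, by nlinarith⟩
  · nlinarith [sq_nonneg (b - (1 - a)), mul_nonneg (sub_nonneg.2 hab) (mul_nonneg (sub_nonneg.2 ha1) (by linarith : (0:ℝ) ≤ 2 - a)), sq_nonneg a, sq_nonneg (1-a), mul_nonneg ha0 (sub_nonneg.2 ha1)]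
  · rw [convexOn_iff_forall_pos]
    refine ⟨convex_univ, fun x _ y _ t s ht hs hts => ?_⟩
    have hc : (0:ℝ) ≤ 3 - 3*a + a^2 := by nlinarith
    have := mul_nonneg (mul_nonneg (mul_nonneg hc ht.le) hs.le) (sq_nonneg (x - y))
    simp only [smul_eq_mul]
    have hs1 : s = 1 - t := by linarith
    subst hs1
    nlinarith [this]
  · have h1 : HasDerivAt (fun b' : ℝ => a - 2*b') (-2) (1-a) := by
      simpa using ((hasDerivAt_id (1-a)).const_mul (2:ℝ)).const_sub a
    have h2 : HasDerivAt (fun b' : ℝ => b'^2) (2*(1-a)) (1-a) := by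
      simpa using hasDerivAt_pow 2 (1-a)
    have h := (h1.const_mul ((1-a)^3)).add (h2.const_mul (3-3*a+a^2))
    exact h.deriv.trans (by ring)
end
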